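/- A large scale space (X, ℒ) has bounded scale measure if and only if there exists a uniformly bounded scale 𝒰 ∈ ℒ such that for every scale 𝒱 ∈ ℒ there is n(𝒱) ∈ ℕ such that for every V ∈ 𝒱 there exists at least one 𝒰-net of V with at most n(𝒱) elements. -/

import Mathlib

/-!
A `U`-net `B₀` of `W` is maximal, so every point of `W` either lies in `B₀` or shares an
element of `U` with a point of `B₀`. Two distinct points that are `U`-close to the same point
of `B₀` lie in a common element of the star `st(U, U)`; hence any `st(U, U)`-separated subset
of `W`, in particular any `st(U, U)`-net of `W`, injects into `B₀`. So a scale `U` with small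
`U`-nets gives bounded scale measure at `st(U, U)`. Conversely, nets exist by Zorn's lemma.
-/

open Set

variable {X Y : Type*}

/-- The star of a set `V` against a family `U` of subsets of `X`. -/
def stA (V : Set X) (U : Set (Set X)) : Set X :=
  ⋃₀ {A | A ∈ U ∧ (A ∩ V).Nonempty}

/-- The star of a family `V` against a family `U`. -/
def stF (V U : Set (Set X)) : Set (Set X) := (fun A => stA A U) '' V

/-- No two distinct elements of `B` belong to a common element of `U`. -/
def NoTwo (U : Set (Set X)) (B : Set X) : Prop :=
  ∀ x ∈ B, ∀ y ∈ B, x ≠ y → ∀ A ∈ U, ¬(x ∈ A ∧ y ∈ A)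

/-- `B` is a `U`-net of `V`: a maximal subset of `V` no two of whose elements
lie in a common element of `U`. -/
def IsNet (U : Set (Set X)) (V B : Set X) : Prop :=
  B ⊆ V ∧ NoTwo U B ∧ ∀ B' : Set X, B ⊆ B' → B' ⊆ V → NoTwo U B' → B' = B

/-- A large scale structure on `X`. -/
structure LSS (X : Type*) where
  fam : Set (Set (Set X))
  nonempty : fam.Nonempty
  refine : ∀ U V : Set (Set X), V ∈ fam →
    (∀ A ∈ U, (∃ a ∈ A, ∃ b ∈ A, a ≠ b) → ∃ B ∈ V, A ⊆ B) → U ∈ fam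
  star : ∀ U ∈ fam, ∀ V ∈ fam, stF U V ∈ fam

/-- Bounded scale measure at scale `U` (net formulation): every `U`-net of every
element of every uniformly bounded scale has uniformly bounded cardinality. -/
def BSMat (L : LSS X) (U : Set (Set X)) : Prop :=
  U ∈ L.fam ∧ ∀ V ∈ L.fam, ∃ n : ℕ, ∀ W ∈ V, ∀ B : Set X,
    IsNet U W B → B.Finite ∧ B.ncard ≤ n

lemma exists_isNet (U : Set (Set X)) (W : Set X) : ∃ B : Set X, IsNet U W B := by
  have hchain : ∀ c ⊆ {B : Set X | B ⊆ W ∧ NoTwo U B}, IsChain (· ⊆ ·) c →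
      ∃ ub ∈ {B : Set X | B ⊆ W ∧ NoTwo U B}, ∀ s ∈ c, s ⊆ ub := by
    intro c hc hchain
    refine ⟨⋃₀ c, ⟨sUnion_subset fun s hs => (hc hs).1, ?_⟩, fun s hs => subset_sUnion_of_mem hs⟩
    rintro x ⟨s, hs, hxs⟩ y ⟨t, ht, hyt⟩
    rcases hchain.total hs ht with hst | hts
    · exact (hc ht).2 x (hst hxs) y hyt
    · exact (hc hs).2 x hxs y (hts hyt)
  obtain ⟨B, hB⟩ := zorn_subset _ hchain
  exact ⟨B, hB.prop.1, hB.prop.2, fun B' hBB' hB'W hB' =>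
    subset_antisymm (hB.2 ⟨hB'W, hB'⟩ hBB') hBB'⟩

/-- The disjunct `x = b` is needed because `U` need not cover `X`. -/
def Near (U : Set (Set X)) (x b : X) : Prop :=
  x = b ∨ ∃ A ∈ U, x ∈ A ∧ b ∈ A

section

variable {U : Set (Set X)}

lemma NoTwo.insert {B : Set X} {x : X} (hB : NoTwo U B)
    (hx : ∀ b ∈ B, ¬Near U x b) : NoTwo U (insert x B) := by
  rintro p (rfl | hp) q (rfl | hq) hpq A hA ⟨hpA, hqA⟩
  · exact hpq rfl
  · exact hx q hq (Or.inr ⟨A, hA, hpA, hqA⟩)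
  · exact hx p hp (Or.inr ⟨A, hA, hqA, hpA⟩)
  · exact hB p hp q hq hpq A hA ⟨hpA, hqA⟩

lemma IsNet.exists_near {W B : Set X} (hB : IsNet U W B) {x : X}
    (hx : x ∈ W) : ∃ b ∈ B, Near U x b := by
  by_contra! hfar
  have hxB : x ∈ B :=
    hB.2.2 _ (subset_insert x B) (insert_subset hx hB.1) (hB.2.1.insert hfar) ▸ mem_insert x B
  exact hfar x hxB (Or.inl rfl)

lemma exists_mem_stF_of_near {x y b : X} (hx : Near U x b) (hy : Near U y b)
    (hxy : x ≠ y) : ∃ S ∈ stF U U, x ∈ S ∧ y ∈ S := by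
  obtain ⟨A, hA, hxA, hbA⟩ : ∃ A ∈ U, x ∈ A ∧ b ∈ A := by
    rcases hx with rfl | hx
    · rcases hy with rfl | ⟨A, hA, -, hbA⟩
      · exact absurd rfl hxy
      · exact ⟨A, hA, hbA, hbA⟩
    · exact hx
  obtain ⟨A', hA', hyA', hbA'⟩ : ∃ A' ∈ U, y ∈ A' ∧ b ∈ A' := by
    rcases hy with rfl | hy
    · exact ⟨A, hA, hbA, hbA⟩
    · exact hy
  exact ⟨stA A U, ⟨A, hA, rfl⟩, ⟨A, ⟨hA, x, hxA, hxA⟩, hxA⟩, ⟨A', ⟨hA', b, hbA', hbA⟩, hyA'⟩⟩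

lemma NoTwo.injOn_of_near {B : Set X} {f : X → X} (hB : NoTwo (stF U U) B)
    (hf : ∀ x ∈ B, Near U x (f x)) : InjOn f B := by
  intro x hx y hy hfxy
  by_contra hxy
  obtain ⟨S, hS, hxS, hyS⟩ := exists_mem_stF_of_near (hf x hx) (hfxy ▸ hf y hy) hxy
  exact hB x hx y hy hxy S hS ⟨hxS, hyS⟩

lemma IsNet.finite_and_ncard_le {W B₀ B : Set X} (hB₀ : IsNet U W B₀)
    (hfin : B₀.Finite) (hBW : B ⊆ W) (hB : NoTwo (stF U U) B) :
    B.Finite ∧ B.ncard ≤ B₀.ncard := by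
  choose! f hfB₀ hnear using fun x (hx : x ∈ B) => hB₀.exists_near (hBW hx)
  have hinj : InjOn f B := hB.injOn_of_near hnear
  exact ⟨Finite.of_finite_image (hfin.subset (image_subset_iff.mpr hfB₀)) hinj,
    ncard_le_ncard_of_injOn f hfB₀ hinj hfin⟩

end

/-- Bounded scale measure (at some scale) is equivalent to the existence of a
uniformly bounded scale `U` so that each element of each uniformly bounded scale
admits at least one `U`-net of bounded cardinality. -/
theorem bsm_iff_exists_net (L : LSS X) :
    (∃ U : Set (Set X), BSMat L U) ↔
      (∃ U : Set (Set X), U ∈ L.fam ∧ ∀ V ∈ L.fam, ∃ n : ℕ, ∀ W ∈ V,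
        ∃ B : Set X, IsNet U W B ∧ B.Finite ∧ B.ncard ≤ n) := by
  constructor
  · rintro ⟨U, hU, hbound⟩
    refine ⟨U, hU, fun V hV => ?_⟩
    obtain ⟨n, hn⟩ := hbound V hV
    exact ⟨n, fun W hW => (exists_isNet U W).imp fun B hB => ⟨hB, hn W hW B hB⟩⟩
  · rintro ⟨U, hU, hnets⟩
    refine ⟨stF U U, L.star U hU U hU, fun V hV => ?_⟩
    obtain ⟨n, hn⟩ := hnets V hV
    refine ⟨n, fun W hW B hB => ?_⟩
    obtain ⟨B₀, hB₀, hfin, hcard⟩ := hn W hW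
    obtain ⟨hBfin, hle⟩ := hB₀.finite_and_ncard_le hfin hB.1 hB.2.1
    exact ⟨hBfin, hle.trans hcard⟩
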